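/- Let Z₁, Z₂, Y be real reflexive separable Banach spaces. Assume (HA): A : Q × Z₂ → Z₂* with A(·,y) continuous for each y and, for each t, A(t,·) bounded, demicontinuous, and strongly monotone with constant m_A > 0; (Hg): g : Q × Z₁ → Z₂* with g(·,z) continuous and ‖g(t,z₁) − g(t,z₂)‖_{Z₂*} ≤ m_g‖z₁ − z₂‖_{Z₁}; N : Z₂ → Y linear, continuous, compact, surjective; J : Q × Y → ℝ with J(t,·) locally Lipschitz and ⟨θ₁ − θ₂, w₁ − w₂⟩ ≥ −c_J‖w₁ − w₂‖_Y² for all θᵢ ∈ ∂J(t,wᵢ), where m_A > c_J‖N‖²; J_δ : Q × Y → ℝ with J_δ(t,·) locally Lipschitz; and suppose V(δ) ≥ 0 is such that for every (t,w) ∈ Q × Z₂ one has ‖ζ − ζ_δ‖_{Z₂*} ≤ V(δ) whenever ζ ∈ N*∂J(t,Nw) and ζ_δ ∈ N*∂J_δ(t,Nw). Let z, z_δ ∈ IC(Q;Z₁), and let y, y_δ ∈ IC(Q;Z₂) satisfy, for all t ∈ Q, g(t,z(t)) − A(t,y(t)) ∈ N*∂J(t, N y(t)) and g(t,z_δ(t))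 − A(t,y_δ(t)) ∈ N*∂J_δ(t, N y_δ(t)). Then for every t ∈ Q: ‖y(t) − y_δ(t)‖_{Z₂} ≤ V(δ)/(m_A − c_J‖N‖²) + (m_g/(m_A − c_J‖N‖²)) ‖z(t) − z_δ(t)‖_{Z₁}. -/

import Mathlib

/-!
Clarke's generalized directional derivative `v ↦ F°(x; v)` of a locally Lipschitz `F` is
positively homogeneous, subadditive and bounded by `K ‖v‖`, so by Hahn–Banach the Clarke
gradient is nonempty; pick `θ ∈ ∂J(t, N yδ(t))`. With `u = y(t) - yδ(t)`, the two inclusions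
write `A(t, y) - A(t, yδ)` as `(g(t, z) - g(t, zδ)) - (η - θ) ∘ N - (θ ∘ N - ηδ ∘ N)`.
Testing with `u`, strong monotonicity of `A`, relaxed monotonicity of `∂J` (which costs
`c_J ‖N‖² ‖u‖²` through `N`) and the bound `‖θ ∘ N - ηδ ∘ N‖ ≤ V(δ)` give
`(m_A - c_J ‖N‖²) ‖u‖² ≤ (m_g ‖z - zδ‖ + V(δ)) ‖u‖`.
-/

open Filter Topology NormedSpace

/-- `IC T m τ x` : the space `IC(Q;X)` of piecewise continuous functions on `Q = [0,T]` with
possible jumps at the impulse times `τ 1, …, τ m`. -/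
def IC {X : Type*} [NormedAddCommGroup X] (T : ℝ) (m : ℕ) (τ : ℕ → ℝ) (x : ℝ → X) : Prop :=
  (∀ t ∈ Set.Icc (0:ℝ) T, (∀ j, 1 ≤ j → j ≤ m → t ≠ τ j) →
      ContinuousWithinAt x (Set.Icc 0 T) t) ∧
  (∀ j, 1 ≤ j → j ≤ m →
      (Filter.Tendsto x (nhdsWithin (τ j) (Set.Iio (τ j))) (nhds (x (τ j))) ∧
       ∃ L, Filter.Tendsto x (nhdsWithin (τ j) (Set.Ioi (τ j))) (nhds L)))

/-- The Clarke generalized directional derivative. -/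
noncomputable def clarkeDeriv {Y : Type*} [NormedAddCommGroup Y] [NormedSpace ℝ Y]
    (F : Y → ℝ) (x v : Y) : ℝ :=
  Filter.limsup (fun p : Y × ℝ => (F (p.1 + p.2 • v) - F p.1) / p.2)
    ((nhds x) ×ˢ (nhdsWithin (0:ℝ) (Set.Ioi 0)))

/-- The Clarke generalized gradient. -/
def clarkeGrad {Y : Type*} [NormedAddCommGroup Y] [NormedSpace ℝ Y]
    (F : Y → ℝ) (x : Y) : Set (StrongDual ℝ Y) :=
  {η | ∀ v : Y, η v ≤ clarkeDeriv F x v}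

theorem Filter.isBoundedUnder_of_eventually_abs_le {α : Type*} {l : Filter α} {u : α → ℝ}
    {a : ℝ} (h : ∀ᶠ p in l, |u p| ≤ a) :
    l.IsBoundedUnder (· ≤ ·) u ∧ l.IsBoundedUnder (· ≥ ·) u :=
  isBoundedUnder_le_abs.1 (isBoundedUnder_of_eventually_le h)

def clarkeFilter {X : Type*} [TopologicalSpace X] (x : X) : Filter (X × ℝ) := 𝓝 x ×ˢ 𝓝[>] 0

instance {X : Type*} [TopologicalSpace X] (x : X) : (clarkeFilter x).NeBot := by
  unfold clarkeFilter
  infer_instance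

theorem map_clarkeFilter_mul {X : Type*} [TopologicalSpace X] (x : X) {c : ℝ} (hc : 0 < c) :
    map (fun p : X × ℝ => (p.1, c * p.2)) (clarkeFilter x) = clarkeFilter x := by
  have hmul : map (c * ·) (𝓝[>] (0 : ℝ)) = 𝓝[>] 0 := by
    conv_lhs => rw [← comap_mulLeft_nhdsGT_zero hc]
    exact map_comap_of_surjective (mul_left_surjective₀ hc.ne') _
  rw [clarkeFilter]
  conv_rhs => rw [← hmul, ← map_id (f := 𝓝 x), prod_map_map_eq']
  rfl

section Clarke

variable {E : Type*} [NormedAddCommGroup E] [NormedSpace ℝ E]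

noncomputable def clarkeQuotient (F : E → ℝ) (v : E) (p : E × ℝ) : ℝ :=
  (F (p.1 + p.2 • v) - F p.1) / p.2

theorem clarkeDeriv_eq_limsup (F : E → ℝ) (x v : E) :
    clarkeDeriv F x v = limsup (clarkeQuotient F v) (clarkeFilter x) := rfl

theorem tendsto_clarkeFilter_add_smul (x v : E) :
    Tendsto (fun p : E × ℝ => (p.1 + p.2 • v, p.2)) (clarkeFilter x) (clarkeFilter x) := by
  have h : Tendsto (fun p : E × ℝ => p.1 + p.2 • v) (𝓝 x ×ˢ 𝓝 0) (𝓝 x) := by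
    rw [← nhds_prod_eq]
    simpa using (by fun_prop : Continuous fun p : E × ℝ => p.1 + p.2 • v).tendsto (x, 0)
  exact (h.mono_left (prod_mono le_rfl nhdsWithin_le_nhds)).prodMk tendsto_snd

theorem LocallyLipschitz.exists_eventually_abs_clarkeQuotient_le {F : E → ℝ}
    (hF : LocallyLipschitz F) (x : E) :
    ∃ K : ℝ, ∀ v, ∀ᶠ p in clarkeFilter x, |clarkeQuotient F v p| ≤ K * ‖v‖ := by
  obtain ⟨K, s, hs, hK⟩ := hF x
  refine ⟨K, fun v => ?_⟩
  have hbase : ∀ᶠ p in clarkeFilter x, p.1 ∈ s := tendsto_fst.eventually hs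
  have hshift : ∀ᶠ p in clarkeFilter x, p.1 + p.2 • v ∈ s :=
    (tendsto_fst.comp (tendsto_clarkeFilter_add_smul x v)).eventually hs
  have hpos : ∀ᶠ p in clarkeFilter x, 0 < p.2 := tendsto_snd.eventually self_mem_nhdsWithin
  filter_upwards [hbase, hshift, hpos] with p hp₁ hp₂ hp
  have hlip := hK.dist_le_mul _ hp₂ _ hp₁
  rw [Real.dist_eq, dist_eq_norm, add_sub_cancel_left, norm_smul, Real.norm_of_nonneg hp.le]
    at hlip
  rw [clarkeQuotient, abs_div, abs_of_pos hp, div_le_iff₀ hp]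
  linarith

theorem LocallyLipschitz.exists_clarkeDeriv_le {F : E → ℝ} (hF : LocallyLipschitz F) (x : E) :
    ∃ K : ℝ, ∀ v, clarkeDeriv F x v ≤ K * ‖v‖ := by
  obtain ⟨K, hK⟩ := hF.exists_eventually_abs_clarkeQuotient_le x
  refine ⟨K, fun v => ?_⟩
  obtain ⟨-, hge⟩ := isBoundedUnder_of_eventually_abs_le (hK v)
  exact limsup_le_of_le hge.isCoboundedUnder_le ((hK v).mono fun p hp => (abs_le.1 hp).2)

theorem LocallyLipschitz.clarkeDeriv_add_le {F : E → ℝ} (hF : LocallyLipschitz F)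
    (x v w : E) : clarkeDeriv F x (v + w) ≤ clarkeDeriv F x v + clarkeDeriv F x w := by
  obtain ⟨K, hK⟩ := hF.exists_eventually_abs_clarkeQuotient_le x
  set φ := fun p : E × ℝ => (p.1 + p.2 • v, p.2)
  have hφ : Tendsto φ (clarkeFilter x) (clarkeFilter x) := tendsto_clarkeFilter_add_smul x v
  -- telescoping: step by `p.2 • v` first, then by `p.2 • w` from the shifted base point
  have hsplit : clarkeQuotient F (v + w) = clarkeQuotient F w ∘ φ + clarkeQuotient F v := by
    funext p
    simp only [clarkeQuotient, φ, Function.comp_apply, Pi.add_apply, smul_add, ← add_assoc]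
    ring
  obtain ⟨hv_le, hv_ge⟩ := isBoundedUnder_of_eventually_abs_le (hK v)
  obtain ⟨hφw_le, hφw_ge⟩ := isBoundedUnder_of_eventually_abs_le (hφ.eventually (hK w))
  obtain ⟨hw_le, -⟩ := isBoundedUnder_of_eventually_abs_le (hK w)
  simp only [clarkeDeriv_eq_limsup, hsplit]
  calc limsup (clarkeQuotient F w ∘ φ + clarkeQuotient F v) (clarkeFilter x)
      ≤ limsup (clarkeQuotient F w ∘ φ) (clarkeFilter x)
          + limsup (clarkeQuotient F v) (clarkeFilter x) :=
        limsup_add_le hφw_ge hφw_le hv_ge.isCoboundedUnder_le hv_le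
    _ ≤ limsup (clarkeQuotient F w) (clarkeFilter x)
          + limsup (clarkeQuotient F v) (clarkeFilter x) := by
        gcongr
        exact hφ.limsup_comp_le_limsup hφw_ge.isCoboundedUnder_le hw_le
    _ = _ := add_comm _ _

theorem LocallyLipschitz.clarkeDeriv_smul {F : E → ℝ} (hF : LocallyLipschitz F)
    (x v : E) {c : ℝ} (hc : 0 < c) : clarkeDeriv F x (c • v) = c * clarkeDeriv F x v := by
  obtain ⟨K, hK⟩ := hF.exists_eventually_abs_clarkeQuotient_le x
  obtain ⟨hle, hge⟩ := isBoundedUnder_of_eventually_abs_le (hK v)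
  have hq : clarkeQuotient F (c • v)
      = ((c * ·) ∘ clarkeQuotient F v) ∘ fun p : E × ℝ => (p.1, c * p.2) := by
    funext p
    simp only [clarkeQuotient, Function.comp_apply, smul_smul, mul_comm p.2 c]
    field_simp
  rw [clarkeDeriv_eq_limsup, clarkeDeriv_eq_limsup, hq, limsup_comp, map_clarkeFilter_mul x hc]
  exact ((monotone_mul_left_of_nonneg hc.le).map_limsup_of_continuousAt _
    (continuous_const_mul c).continuousAt hle hge.isCoboundedUnder_le).symm

end Clarke

theorem exists_strongDual_le_of_sublinear {E : Type*} [NormedAddCommGroup E] [NormedSpace ℝ E]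
    {N : E → ℝ} (hsmul : ∀ c : ℝ, 0 < c → ∀ v, N (c • v) = c * N v)
    (hadd : ∀ v w, N (v + w) ≤ N v + N w) {K : ℝ} (hK : ∀ v, N v ≤ K * ‖v‖) :
    ∃ φ : StrongDual ℝ E, ∀ v, φ v ≤ N v := by
  have hN₀ : N 0 = 0 := by
    have h := hsmul 2 two_pos 0
    rw [smul_zero] at h
    linarith
  obtain ⟨φ, -, hφ⟩ := exists_extension_of_le_sublinear (⟨⊥, 0⟩ : E →ₗ.[ℝ] ℝ) N hsmul hadd
    (fun ⟨v, hv⟩ => by simp [(Submodule.mem_bot ℝ).1 hv, hN₀])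
  have hbound : ∀ v, ‖φ v‖ ≤ K * ‖v‖ := fun v => by
    rw [Real.norm_eq_abs, abs_le]
    constructor
    · have h := (hφ (-v)).trans (hK (-v))
      rw [map_neg, norm_neg] at h
      linarith
    · linarith [hφ v, hK v]
  exact ⟨φ.mkContinuous K hbound, hφ⟩

theorem LocallyLipschitz.clarkeGrad_nonempty {E : Type*} [NormedAddCommGroup E]
    [NormedSpace ℝ E] {F : E → ℝ} (hF : LocallyLipschitz F) (x : E) :
    (clarkeGrad F x).Nonempty := by
  obtain ⟨K, hK⟩ := hF.exists_clarkeDeriv_le x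
  exact exists_strongDual_le_of_sublinear (fun _ hc v => hF.clarkeDeriv_smul x v hc)
    (hF.clarkeDeriv_add_le x) hK

theorem norm_sub_le_of_mem_comp_clarkeGrad {Z Y : Type*} [NormedAddCommGroup Z]
    [NormedSpace ℝ Z] [NormedAddCommGroup Y] [NormedSpace ℝ Y]
    {A : Z → StrongDual ℝ Z} {mA : ℝ}
    (hA : ∀ y₁ y₂ : Z, mA * ‖y₁ - y₂‖ ^ 2 ≤ (A y₁ - A y₂) (y₁ - y₂))
    {N : Z →L[ℝ] Y} {J Jδ : Y → ℝ} (hJ : LocallyLipschitz J) {cJ : ℝ} (hcJ : 0 ≤ cJ)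
    (hJrel : ∀ w₁ w₂ : Y, ∀ θ₁ ∈ clarkeGrad J w₁, ∀ θ₂ ∈ clarkeGrad J w₂,
      -(cJ * ‖w₁ - w₂‖ ^ 2) ≤ (θ₁ - θ₂) (w₁ - w₂))
    {V : ℝ} (hV : ∀ w : Z,
      ∀ ζ ∈ (fun η : StrongDual ℝ Y => η.comp N) '' clarkeGrad J (N w),
      ∀ ζδ ∈ (fun η : StrongDual ℝ Y => η.comp N) '' clarkeGrad Jδ (N w), ‖ζ - ζδ‖ ≤ V)
    {f fδ : StrongDual ℝ Z} {y yδ : Z}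
    (h : f - A y ∈ (fun η : StrongDual ℝ Y => η.comp N) '' clarkeGrad J (N y))
    (hδ : fδ - A yδ ∈ (fun η : StrongDual ℝ Y => η.comp N) '' clarkeGrad Jδ (N yδ)) :
    (mA - cJ * ‖N‖ ^ 2) * ‖y - yδ‖ ≤ ‖f - fδ‖ + V := by
  obtain ⟨η, hη, hηA⟩ := h
  obtain ⟨ηδ, hηδ, hηδA⟩ := hδ
  -- compare `ηδ` with some `θ ∈ ∂J(N yδ)`: the relaxed monotonicity is only known for `J`
  obtain ⟨θ, hθ⟩ := hJ.clarkeGrad_nonempty (N yδ)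
  set u := y - yδ
  have hsplit : (A y - A yδ) u = (f - fδ) u - (η - θ) (N u) - (θ.comp N - ηδ.comp N) u := by
    have hAy : A y = f - η.comp N := by rw [← sub_sub_cancel f (A y), ← hηA]
    have hAyδ : A yδ = fδ - ηδ.comp N := by rw [← sub_sub_cancel fδ (A yδ), ← hηδA]
    simp only [hAy, hAyδ, sub_apply, ContinuousLinearMap.comp_apply]
    ring
  have hf : (f - fδ) u ≤ ‖f - fδ‖ * ‖u‖ := (Real.le_norm_self _).trans ((f - fδ).le_opNorm u)
  have hJu : -(cJ * ‖N‖ ^ 2 * ‖u‖ ^ 2) ≤ (η - θ) (N u) := by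
    have hrel := hJrel _ _ η hη θ hθ
    rw [← map_sub] at hrel
    have hNu : ‖N u‖ ^ 2 ≤ (‖N‖ * ‖u‖) ^ 2 := by gcongr; exact N.le_opNorm u
    nlinarith
  have hθδ : -(‖θ.comp N - ηδ.comp N‖ * ‖u‖) ≤ (θ.comp N - ηδ.comp N) u :=
    neg_le_of_abs_le ((θ.comp N - ηδ.comp N).le_opNorm u)
  have hquad : (mA - cJ * ‖N‖ ^ 2) * ‖u‖ ^ 2
      ≤ (‖f - fδ‖ + ‖θ.comp N - ηδ.comp N‖) * ‖u‖ := by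
    nlinarith [hA y yδ]
  have hlin : (mA - cJ * ‖N‖ ^ 2) * ‖u‖ ≤ ‖f - fδ‖ + ‖θ.comp N - ηδ.comp N‖ := by
    rcases (norm_nonneg u).eq_or_lt with hu | hu
    · rw [← hu, mul_zero]
      positivity
    · exact le_of_mul_le_mul_right (by nlinarith) hu
  linarith [hV yδ _ ⟨θ, hθ, rfl⟩ _ ⟨ηδ, hηδ, rfl⟩]

theorem statement_9_general
    {Z₁ Z₂ Y : Type*}
    [NormedAddCommGroup Z₁]
    [NormedAddCommGroup Z₂] [NormedSpace ℝ Z₂]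
    [NormedAddCommGroup Y] [NormedSpace ℝ Y]
    (T : ℝ)
    -- (HA)
    (A : ℝ → Z₂ → StrongDual ℝ Z₂)
    (mA : ℝ)
    (hAsm : ∀ t ∈ Set.Icc (0:ℝ) T, ∀ y₁ y₂ : Z₂,
      mA * ‖y₁ - y₂‖ ^ 2 ≤ (A t y₁ - A t y₂) (y₁ - y₂))
    -- (Hg)
    (g : ℝ → Z₁ → StrongDual ℝ Z₂)
    (mg : ℝ)
    (hglip : ∀ t ∈ Set.Icc (0:ℝ) T, ∀ z₁ z₂ : Z₁, ‖g t z₁ - g t z₂‖ ≤ mg * ‖z₁ - z₂‖)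
    -- N
    (N : Z₂ →L[ℝ] Y)
    -- J and its relaxed monotonicity
    (J : ℝ → Y → ℝ)
    (hJlip : ∀ t ∈ Set.Icc (0:ℝ) T, LocallyLipschitz (J t))
    (cJ : ℝ) (hcJ : 0 < cJ)
    (hJrel : ∀ t ∈ Set.Icc (0:ℝ) T, ∀ w₁ w₂ : Y,
      ∀ θ₁ ∈ clarkeGrad (J t) w₁, ∀ θ₂ ∈ clarkeGrad (J t) w₂,
      -(cJ * ‖w₁ - w₂‖ ^ 2) ≤ (θ₁ - θ₂) (w₁ - w₂))
    (hO : cJ * ‖N‖ ^ 2 < mA)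
    -- the perturbed functional
    (Jδ : ℝ → Y → ℝ)
    -- the perturbation bound `V(δ)`
    (Vδ : ℝ)
    (hV : ∀ t ∈ Set.Icc (0:ℝ) T, ∀ w : Z₂,
      ∀ ζ ∈ (fun η : StrongDual ℝ Y => η.comp N) '' clarkeGrad (J t) (N w),
      ∀ ζδ ∈ (fun η : StrongDual ℝ Y => η.comp N) '' clarkeGrad (Jδ t) (N w),
        ‖ζ - ζδ‖ ≤ Vδ)
    -- the two solutions
    (z zδ : ℝ → Z₁)
    (y yδ : ℝ → Z₂)
    (hincl : ∀ t ∈ Set.Icc (0:ℝ) T,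
      g t (z t) - A t (y t) ∈
        (fun η : StrongDual ℝ Y => η.comp N) '' clarkeGrad (J t) (N (y t)))
    (hinclδ : ∀ t ∈ Set.Icc (0:ℝ) T,
      g t (zδ t) - A t (yδ t) ∈
        (fun η : StrongDual ℝ Y => η.comp N) '' clarkeGrad (Jδ t) (N (yδ t))) :
    ∀ t ∈ Set.Icc (0:ℝ) T,
      ‖y t - yδ t‖ ≤ Vδ / (mA - cJ * ‖N‖ ^ 2)
        + (mg / (mA - cJ * ‖N‖ ^ 2)) * ‖z t - zδ t‖ := by
  intro t ht
  have hd : 0 < mA - cJ * ‖N‖ ^ 2 := sub_pos.2 hO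
  have hest := norm_sub_le_of_mem_comp_clarkeGrad (hAsm t ht) (hJlip t ht) hcJ.le
    (hJrel t ht) (hV t ht) (hincl t ht) (hinclδ t ht)
  rw [div_mul_eq_mul_div, ← add_div, le_div_iff₀ hd]
  linarith [hglip t ht (z t) (zδ t)]

/-- Pointwise estimate between the solutions of the hemivariational
inclusion with data `(J, z)` and of the perturbed inclusion with data `(J_δ, z_δ)`. -/
theorem statement_9
    {Z₁ Z₂ Y : Type*}
    [NormedAddCommGroup Z₁] [NormedSpace ℝ Z₁] [CompleteSpace Z₁]
    [TopologicalSpace.SeparableSpace Z₁]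
    [NormedAddCommGroup Z₂] [NormedSpace ℝ Z₂] [CompleteSpace Z₂]
    [TopologicalSpace.SeparableSpace Z₂]
    [NormedAddCommGroup Y] [NormedSpace ℝ Y] [CompleteSpace Y]
    [TopologicalSpace.SeparableSpace Y]
    (hreflZ₁ : Function.Surjective ⇑(NormedSpace.inclusionInDoubleDual ℝ Z₁))
    (hreflZ₂ : Function.Surjective ⇑(NormedSpace.inclusionInDoubleDual ℝ Z₂))
    (hreflY : Function.Surjective ⇑(NormedSpace.inclusionInDoubleDual ℝ Y))
    (T : ℝ) (hT : 0 < T) (m : ℕ) (τ : ℕ → ℝ)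
    (hτ0 : τ 0 = 0) (hτT : τ (m+1) = T) (hτmono : ∀ j ≤ m, τ j < τ (j+1))
    -- (HA)
    (A : ℝ → Z₂ → StrongDual ℝ Z₂)
    (hAt : ∀ y : Z₂, ContinuousOn (fun t => A t y) (Set.Icc 0 T))
    (hAbdd : ∀ t ∈ Set.Icc (0:ℝ) T, ∀ s : Set Z₂,
      Bornology.IsBounded s → Bornology.IsBounded (A t '' s))
    (hAdemi : ∀ t ∈ Set.Icc (0:ℝ) T, ∀ (zn : ℕ → Z₂) (z : Z₂),
      Filter.Tendsto zn Filter.atTop (nhds z) →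
      ∀ v : Z₂, Filter.Tendsto (fun n => A t (zn n) v) Filter.atTop (nhds (A t z v)))
    (mA : ℝ) (hmA : 0 < mA)
    (hAsm : ∀ t ∈ Set.Icc (0:ℝ) T, ∀ y₁ y₂ : Z₂,
      mA * ‖y₁ - y₂‖ ^ 2 ≤ (A t y₁ - A t y₂) (y₁ - y₂))
    -- (Hg)
    (g : ℝ → Z₁ → StrongDual ℝ Z₂)
    (hgt : ∀ z : Z₁, ContinuousOn (fun t => g t z) (Set.Icc 0 T))
    (mg : ℝ) (hmg : 0 < mg)
    (hglip : ∀ t ∈ Set.Icc (0:ℝ) T, ∀ z₁ z₂ : Z₁, ‖g t z₁ - g t z₂‖ ≤ mg * ‖z₁ - z₂‖)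
    -- N
    (N : Z₂ →L[ℝ] Y) (hNcompact : IsCompactOperator (⇑N)) (hNsurj : Function.Surjective ⇑N)
    -- J and its relaxed monotonicity
    (J : ℝ → Y → ℝ)
    (hJlip : ∀ t ∈ Set.Icc (0:ℝ) T, LocallyLipschitz (J t))
    (cJ : ℝ) (hcJ : 0 < cJ)
    (hJrel : ∀ t ∈ Set.Icc (0:ℝ) T, ∀ w₁ w₂ : Y,
      ∀ θ₁ ∈ clarkeGrad (J t) w₁, ∀ θ₂ ∈ clarkeGrad (J t) w₂,
      -(cJ * ‖w₁ - w₂‖ ^ 2) ≤ (θ₁ - θ₂) (w₁ - w₂))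
    (hO : cJ * ‖N‖ ^ 2 < mA)
    -- the perturbed functional
    (Jδ : ℝ → Y → ℝ)
    (hJδlip : ∀ t ∈ Set.Icc (0:ℝ) T, LocallyLipschitz (Jδ t))
    -- the perturbation bound `V(δ)`
    (Vδ : ℝ) (hVδ : 0 ≤ Vδ)
    (hV : ∀ t ∈ Set.Icc (0:ℝ) T, ∀ w : Z₂,
      ∀ ζ ∈ (fun η : StrongDual ℝ Y => η.comp N) '' clarkeGrad (J t) (N w),
      ∀ ζδ ∈ (fun η : StrongDual ℝ Y => η.comp N) '' clarkeGrad (Jδ t) (N w),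
        ‖ζ - ζδ‖ ≤ Vδ)
    -- the two solutions
    (z zδ : ℝ → Z₁) (hz : IC T m τ z) (hzδ : IC T m τ zδ)
    (y yδ : ℝ → Z₂) (hy : IC T m τ y) (hyδ : IC T m τ yδ)
    (hincl : ∀ t ∈ Set.Icc (0:ℝ) T,
      g t (z t) - A t (y t) ∈
        (fun η : StrongDual ℝ Y => η.comp N) '' clarkeGrad (J t) (N (y t)))
    (hinclδ : ∀ t ∈ Set.Icc (0:ℝ) T,
      g t (zδ t) - A t (yδ t) ∈
        (fun η : StrongDual ℝ Y => η.comp N) '' clarkeGrad (Jδ t) (N (yδ t))) :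
    ∀ t ∈ Set.Icc (0:ℝ) T,
      ‖y t - yδ t‖ ≤ Vδ / (mA - cJ * ‖N‖ ^ 2)
        + (mg / (mA - cJ * ‖N‖ ^ 2)) * ‖z t - zδ t‖ :=
  statement_9_general T A mA hAsm g mg hglip N J hJlip cJ hcJ hJrel hO Jδ Vδ hV z zδ y yδ hincl
    hinclδ
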